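/- arXiv:math/0608777 — 4 statements merged into one kernel-verified Lean document; each statement's English description precedes it below -/
import Mathlib

section
/- Let $(A, \mathfrak{m})$ be a Noetherian local ring and let $x_1, x_2, \dots, x_n$ be elements of $A$ that generate the maximal ideal $\mathfrak{m}$. Then for any integers $k_1, \dots, k_n \geq 1$, the length of the $A$-module $A/(x_1^{k_1}, x_2^{k_2}, \dots, x_n^{k_n})$ is at most $k_1 k_2 \cdots k_n$. -/
/-- The length `ℓ_A(M)` of an `A`-module `M`, defined as the supremum of the lengths of
strictly increasing chains of submodules of `M` (i.e. the Krull dimension of the lattice of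
submodules). -/
noncomputable def moduleLength (A M : Type*) [CommRing A] [AddCommGroup M] [Module A M] :
    WithBot ℕ∞ :=
  Order.krullDim (Submodule A M)

/-! The cyclic submodule of `A ⧸ (I, a ^ (k + 1))` generated by `a ^ k` is killed by `(I, a)`,
and the quotient by it is `A ⧸ (I, a ^ k)`. Hence `ℓ(A ⧸ (I, a ^ k)) ≤ k · ℓ(A ⧸ (I, a))`, and
replacing the generators `xᵢ` of `𝔪` by `xᵢ ^ kᵢ` one at a time gives
`ℓ(A ⧸ (xᵢ ^ kᵢ)) ≤ (∏ kᵢ) · ℓ(A ⧸ 𝔪) = ∏ kᵢ`. -/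

open Module Submodule Ideal

section

variable {R M : Type*} [CommRing R] [AddCommGroup M] [Module R M]

theorem Module.length_quotient_eq_length_span_add_length_quotient_sup
    (p : Submodule R M) (x : M) :
    length R (M ⧸ p) = length R (R ∙ p.mkQ x) + length R (M ⧸ (p ⊔ R ∙ x)) := by
  have hN : (p ⊔ R ∙ x).map p.mkQ = R ∙ p.mkQ x := by
    rw [Submodule.map_sup, mkQ_map_self, bot_sup_eq, Submodule.map_span, Set.image_singleton]
  set N := (p ⊔ R ∙ x).map p.mkQ
  rw [length_eq_add_of_exact N.subtype N.mkQ (subtype_injective _) (mkQ_surjective _)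
    (LinearMap.exact_subtype_mkQ _), (quotientQuotientEquivQuotient p _ le_sup_left).length_eq,
    hN]

theorem Module.length_span_singleton_le_of_le_torsionOf {I : Ideal R} {x : M}
    (h : I ≤ torsionOf R M x) : length R (R ∙ x) ≤ length R (R ⧸ I) := by
  rw [← (quotTorsionOfEquivSpanSingleton R M x).length_eq]
  exact length_le_of_surjective (factor h) (factor_surjective h)

theorem Ideal.length_quotient_sup_span_pow_succ_le (I : Ideal R) (a : R) (k : ℕ) :
    length R (R ⧸ (I ⊔ span {a ^ (k + 1)})) ≤
      length R (R ⧸ (I ⊔ span {a})) + length R (R ⧸ (I ⊔ span {a ^ k})) := by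
  set p := I ⊔ span {a ^ (k + 1)}
  have hsup : p ⊔ R ∙ a ^ k = I ⊔ span {a ^ k} := by
    rw [submodule_span_eq, sup_assoc, sup_eq_right.mpr
      (span_singleton_le_span_singleton.mpr (pow_dvd_pow a k.le_succ))]
  have htors : I ⊔ span {a} ≤ torsionOf R (R ⧸ p) (p.mkQ (a ^ k)) := by
    refine sup_le (fun r hr => ?_) (span_le.mpr ?_)
    · rw [mem_torsionOf_iff, ← map_smul, mkQ_apply, Quotient.mk_eq_zero]
      exact mem_sup_left (I.mul_mem_right _ hr)
    · rintro _ rfl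
      rw [SetLike.mem_coe, mem_torsionOf_iff, ← map_smul, mkQ_apply, Quotient.mk_eq_zero,
        smul_eq_mul, ← pow_succ']
      exact mem_sup_right (mem_span_singleton_self _)
  rw [length_quotient_eq_length_span_add_length_quotient_sup, hsup]
  gcongr
  exact length_span_singleton_le_of_le_torsionOf htors

theorem Ideal.length_quotient_sup_span_pow_le (I : Ideal R) (a : R) (k : ℕ) :
    length R (R ⧸ (I ⊔ span {a ^ k})) ≤ k * length R (R ⧸ (I ⊔ span {a})) := by
  induction k with
  | zero => simp
  | succ k ih =>
    calc length R (R ⧸ (I ⊔ span {a ^ (k + 1)}))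
        ≤ length R (R ⧸ (I ⊔ span {a})) + length R (R ⧸ (I ⊔ span {a ^ k})) :=
          length_quotient_sup_span_pow_succ_le I a k
      _ ≤ length R (R ⧸ (I ⊔ span {a})) + k * length R (R ⧸ (I ⊔ span {a})) := by gcongr
      _ = (k + 1 : ℕ) * length R (R ⧸ (I ⊔ span {a})) := by push_cast; ring

theorem Ideal.length_quotient_sup_span_image_pow_le {ι : Type*} (I : Ideal R) (x : ι → R)
    (k : ι → ℕ) (s : Finset ι) :
    length R (R ⧸ (I ⊔ span ((fun i => x i ^ k i) '' s))) ≤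
      (∏ i ∈ s, k i : ℕ) * length R (R ⧸ (I ⊔ span (x '' s))) := by
  classical
  induction s using Finset.induction_on generalizing I with
  | empty =>
    rw [Finset.coe_empty, Set.image_empty, Set.image_empty, span_empty, sup_bot_eq,
      Finset.prod_empty, Nat.cast_one, one_mul]
  | insert j s hj ih =>
    rw [Finset.coe_insert, Set.image_insert_eq, Set.image_insert_eq, span_insert, span_insert,
      Finset.prod_insert hj, Nat.cast_mul]
    set Sk := span ((fun i => x i ^ k i) '' s)
    set S := span (x '' s)
    calc length R (R ⧸ (I ⊔ (span {x j ^ k j} ⊔ Sk)))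
        = length R (R ⧸ (I ⊔ span {x j ^ k j} ⊔ Sk)) := by rw [sup_assoc]
      _ ≤ (∏ i ∈ s, k i : ℕ) * length R (R ⧸ (I ⊔ span {x j ^ k j} ⊔ S)) := ih _
      _ = (∏ i ∈ s, k i : ℕ) * length R (R ⧸ (I ⊔ S ⊔ span {x j ^ k j})) := by
          rw [sup_right_comm]
      _ ≤ (∏ i ∈ s, k i : ℕ) * (k j * length R (R ⧸ (I ⊔ S ⊔ span {x j}))) := by
          gcongr
          exact length_quotient_sup_span_pow_le _ _ _
      _ = k j * (∏ i ∈ s, k i : ℕ) * length R (R ⧸ (I ⊔ (span {x j} ⊔ S))) := by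
          rw [sup_right_comm, sup_assoc]; ring

end

theorem length_quotient_pow_span_le_general
    {A : Type*} [CommRing A] [IsLocalRing A]
    {n : ℕ} (x : Fin n → A)
    (hx : Ideal.span (Set.range x) = IsLocalRing.maximalIdeal A)
    (k : Fin n → ℕ) :
    moduleLength A (A ⧸ Ideal.span (Set.range fun i => x i ^ k i)) ≤
      ((∏ i, k i : ℕ) : WithBot ℕ∞) := by
  have : IsSimpleModule A (A ⧸ IsLocalRing.maximalIdeal A) :=
    isSimpleModule_iff_isCoatom.mpr (IsLocalRing.maximalIdeal.isMaximal A).out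
  have h := length_quotient_sup_span_image_pow_le ⊥ x k Finset.univ
  rw [Finset.coe_univ, Set.image_univ, Set.image_univ, bot_sup_eq, bot_sup_eq, hx,
    length_eq_one A (A ⧸ IsLocalRing.maximalIdeal A), mul_one] at h
  rw [moduleLength, ← coe_length]
  exact (WithBot.coe_le_coe.mpr h).trans_eq (WithBot.coe_natCast _)

/-- Let `(A, 𝔪)` be a Noetherian local ring and let `x₁, …, xₙ` generate the maximal ideal `𝔪`.
Then for any integers `k₁, …, kₙ ≥ 1`, the length of the `A`-module
`A/(x₁^{k₁}, …, xₙ^{kₙ})` is at most `k₁ k₂ ⋯ kₙ`. -/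
theorem length_quotient_pow_span_le
    {A : Type*} [CommRing A] [IsNoetherianRing A] [IsLocalRing A]
    {n : ℕ} (x : Fin n → A)
    (hx : Ideal.span (Set.range x) = IsLocalRing.maximalIdeal A)
    (k : Fin n → ℕ) (hk : ∀ i, 1 ≤ k i) :
    moduleLength A (A ⧸ Ideal.span (Set.range fun i => x i ^ k i)) ≤
      ((∏ i, k i : ℕ) : WithBot ℕ∞) :=
  length_quotient_pow_span_le_general x hx k
end

section
/- Let $(A, \mathfrak{m})$ be a Noetherian local ring, let $\mathfrak{D}$ be a set of derivations of $A$, and let $I$ be a maximally $\mathfrak{D}$-differential ideal of $A$. If the quotient ring $A/I$ has prime characteristic $p > 0$, then $a^p \in I$ for every $a \in \mathfrak{m}$. -/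
/-- `d` is a derivation of the commutative ring `A`: an additive endomorphism satisfying the
Leibniz rule `d(ab) = a·d(b) + b·d(a)`. -/
def IsDeriv {A : Type*} [CommRing A] (d : A →+ A) : Prop :=
  ∀ a b : A, d (a * b) = a * d b + b * d a

/-- An ideal `I` is `𝔇`-differential if `d(I) ⊆ I` for every `d ∈ 𝔇`. -/
def IsDiffIdeal {A : Type*} [CommRing A] (𝔇 : Set (A →+ A)) (I : Ideal A) : Prop :=
  ∀ d ∈ 𝔇, ∀ x ∈ I, d x ∈ I

/-- An ideal `I` is maximally `𝔇`-differential if it is a proper `𝔇`-differential ideal and no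
ideal `J` with `I ⊊ J ⊊ A` is `𝔇`-differential. -/
def IsMaxDiffIdeal {A : Type*} [CommRing A] (𝔇 : Set (A →+ A)) (I : Ideal A) : Prop :=
  I ≠ ⊤ ∧ IsDiffIdeal 𝔇 I ∧ ∀ J : Ideal A, I < J → J < ⊤ → ¬ IsDiffIdeal 𝔇 J

/-- Power rule for derivations: `d(a^(n+1)) = (n+1)·a^n·d(a)`. -/
lemma isDeriv_pow {A : Type*} [CommRing A] (d : A →+ A) (hd : IsDeriv d) (a : A) :
    ∀ n : ℕ, d (a ^ (n + 1)) = (n + 1 : ℕ) * a ^ n * d a := by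
  intro n
  induction n with
  | zero => simp
  | succ n ih =>
    have : a ^ (n + 2) = a * a ^ (n + 1) := by ring
    rw [this, hd, ih]
    push_cast
    ring

/-- Let `(A, 𝔪)` be a Noetherian local ring, `𝔇` a set of derivations of `A`, and `I` a maximally
`𝔇`-differential ideal of `A`.  If `A/I` has prime characteristic `p > 0`, then `a^p ∈ I` for
every `a ∈ 𝔪`. -/
theorem pow_p_mem_maxDiffIdeal
    {A : Type*} [CommRing A] [IsNoetherianRing A] [IsLocalRing A]
    (𝔇 : Set (A →+ A)) (h𝔇 : ∀ d ∈ 𝔇, IsDeriv d)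
    (I : Ideal A) (hI : IsMaxDiffIdeal 𝔇 I)
    (p : ℕ) (hp : p.Prime) (hchar : CharP (A ⧸ I) p)
    (a : A) (ha : a ∈ IsLocalRing.maximalIdeal A) :
    a ^ p ∈ I := by
  obtain ⟨hItop, hIdiff, hImax⟩ := hI
  -- p · 1 ∈ I
  have hpI : (p : A) ∈ I := by
    have : Ideal.Quotient.mk I (p : A) = 0 := by
      rw [map_natCast]; exact CharP.cast_eq_zero (A ⧸ I) p
    rwa [Ideal.Quotient.eq_zero_iff_mem] at this
  -- d (a^p) ∈ I for every d ∈ 𝔇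
  have hdap : ∀ d ∈ 𝔇, d (a ^ p) ∈ I := by
    intro d hd
    obtain ⟨m, hm⟩ : ∃ m, p = m + 1 := ⟨p - 1, (Nat.succ_pred_eq_of_pos hp.pos).symm⟩
    rw [hm, isDeriv_pow d (h𝔇 d hd) a m]
    have : ((m + 1 : ℕ) : A) * a ^ m * d a = (p : A) * (a ^ m * d a) := by
      rw [hm]; push_cast; ring
    rw [this]
    exact I.mul_mem_right _ hpI
  by_contra hap
  set J : Ideal A := I ⊔ Ideal.span {a ^ p} with hJ
  have hapJ : a ^ p ∈ J := Ideal.mem_sup_right (Ideal.subset_span rfl)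
  have hIJ : I < J := lt_of_le_of_ne le_sup_left (fun h => hap (h ▸ hapJ))
  have hJm : J ≤ IsLocalRing.maximalIdeal A := by
    apply sup_le (IsLocalRing.le_maximalIdeal hItop)
    rw [Ideal.span_le, Set.singleton_subset_iff]
    exact Ideal.pow_mem_of_mem _ ha p hp.pos
  have hJtop : J < ⊤ :=
    lt_of_le_of_lt hJm (lt_top_iff_ne_top.mpr (IsLocalRing.maximalIdeal.isMaximal A).ne_top)
  refine hImax J hIJ hJtop ?_
  intro d hd x hx
  rw [Submodule.mem_sup] at hx
  obtain ⟨y, hy, z, hz, rfl⟩ := hx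
  rw [Ideal.mem_span_singleton] at hz
  obtain ⟨r, rfl⟩ := hz
  rw [map_add, (h𝔇 d hd) (a ^ p) r]
  refine J.add_mem (Ideal.mem_sup_left (hIdiff d hd y hy)) (J.add_mem ?_ ?_)
  · exact J.mul_mem_right _ hapJ
  · exact J.mul_mem_left _ (Ideal.mem_sup_left (hdap d hd))
end

section
/- Let $(A, \mathfrak{m})$ be a Noetherian local ring, let $\mathfrak{D}$ be a set of derivations of $A$, and let $I$ be a maximally $\mathfrak{D}$-differential ideal of $A$. If the quotient ring $A/I$ has prime characteristic $p > 0$, then $A/I$ has finite length as an $A$-module; in particular, $I$ is an $\mathfrak{m}$-primary ideal and $\dim(A/I) = 0$. -/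
/-! In characteristic `p`, a derivation kills `p`-th powers modulo `I`, so for `x ∈ 𝔪` the ideal
`I + (x ^ p)` is again a proper differential ideal; maximality forces `x ^ p ∈ I`. Hence
`√I = 𝔪`, and a Noetherian ring modulo an ideal with maximal radical is Artinian. -/

section Derivation

variable {A : Type*} [CommRing A] {d : A →+ A}

theorem IsDeriv.map_one (hd : IsDeriv d) : d 1 = 0 := by
  simpa using hd 1 1

theorem IsDeriv.map_pow_succ (hd : IsDeriv d) (x : A) :
    ∀ n : ℕ, d (x ^ (n + 1)) = ((n + 1 : ℕ) : A) * x ^ n * d x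
  | 0 => by simp
  | n + 1 => by
    rw [pow_succ', hd x (x ^ (n + 1)), hd.map_pow_succ x n]
    push_cast
    ring

theorem IsDeriv.natCast_dvd_map_pow (hd : IsDeriv d) (x : A) (n : ℕ) : (n : A) ∣ d (x ^ n) := by
  cases n with
  | zero => simp [hd.map_one]
  | succ n => exact ⟨x ^ n * d x, by rw [hd.map_pow_succ, mul_assoc]⟩

end Derivation

section DiffIdeal

variable {A : Type*} [CommRing A] {𝔇 : Set (A →+ A)} {I : Ideal A}

theorem IsDiffIdeal.sup_span_singleton (h𝔇 : ∀ d ∈ 𝔇, IsDeriv d) (hI : IsDiffIdeal 𝔇 I) {y : A}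
    (hy : ∀ d ∈ 𝔇, d y ∈ I ⊔ Ideal.span {y}) : IsDiffIdeal 𝔇 (I ⊔ Ideal.span {y}) := by
  intro d hd z hz
  obtain ⟨i, hi, _, hay, rfl⟩ := Submodule.mem_sup.mp hz
  obtain ⟨a, rfl⟩ := Ideal.mem_span_singleton'.mp hay
  have hyJ : y ∈ I ⊔ Ideal.span {y} := Ideal.mem_sup_right (Ideal.mem_span_singleton_self y)
  rw [map_add, h𝔇 d hd]
  exact add_mem (Ideal.mem_sup_left (hI d hd i hi))
    (add_mem (Ideal.mul_mem_left _ a (hy d hd)) (Ideal.mul_mem_right _ _ hyJ))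

theorem IsMaxDiffIdeal.eq_of_le {J : Ideal A} (hI : IsMaxDiffIdeal 𝔇 I) (hIJ : I ≤ J)
    (hJ : J ≠ ⊤) (hJd : IsDiffIdeal 𝔇 J) : J = I := by
  by_contra hne
  exact hI.2.2 J (lt_of_le_of_ne hIJ (Ne.symm hne)) (lt_top_iff_ne_top.mpr hJ) hJd

theorem IsMaxDiffIdeal.pow_mem_of_natCast_mem (h𝔇 : ∀ d ∈ 𝔇, IsDeriv d)
    (hI : IsMaxDiffIdeal 𝔇 I) {p : ℕ} (hpI : (p : A) ∈ I) {x : A}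
    (hx : I ⊔ Ideal.span {x ^ p} ≠ ⊤) : x ^ p ∈ I := by
  have hdiff : IsDiffIdeal 𝔇 (I ⊔ Ideal.span {x ^ p}) :=
    hI.2.1.sup_span_singleton h𝔇 fun d hd ↦ Ideal.mem_sup_left <|
      Ideal.mem_of_dvd _ ((h𝔇 d hd).natCast_dvd_map_pow x p) hpI
  rw [← hI.eq_of_le le_sup_left hx hdiff]
  exact Ideal.mem_sup_right (Ideal.mem_span_singleton_self _)

theorem IsMaxDiffIdeal.radical_eq_maximalIdeal [IsLocalRing A] (h𝔇 : ∀ d ∈ 𝔇, IsDeriv d)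
    (hI : IsMaxDiffIdeal 𝔇 I) {p : ℕ} (hp : p ≠ 0) (hpI : (p : A) ∈ I) :
    I.radical = IsLocalRing.maximalIdeal A := by
  refine le_antisymm (IsLocalRing.le_maximalIdeal fun h ↦ hI.1 (Ideal.radical_eq_top.mp h))
    fun x hx ↦ ⟨p, hI.pow_mem_of_natCast_mem h𝔇 hpI ?_⟩
  refine ne_top_of_le_ne_top (IsLocalRing.maximalIdeal.isMaximal A).ne_top (sup_le ?_ ?_)
  · exact IsLocalRing.le_maximalIdeal hI.1
  · rw [Ideal.span_singleton_le_iff_mem]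
    exact Ideal.pow_mem_of_mem _ hx p (Nat.pos_of_ne_zero hp)

end DiffIdeal

section MaximalRadical

variable {A : Type*} [CommRing A] {I : Ideal A}

theorem Ideal.krullDimLE_zero_quotient_of_isMaximal_radical (h : I.radical.IsMaximal) :
    Ring.KrullDimLE 0 (A ⧸ I) := by
  rw [Ideal.krullDimLE_zero_quotient_iff_forall_minimalPrimes_isMaximal,
    Ideal.minimalPrimes_eq_subsingleton (Ideal.isPrimary_of_isMaximal_radical h)]
  rintro J rfl
  exact h

theorem Ideal.ringKrullDim_quotient_eq_zero_of_isMaximal_radical (h : I.radical.IsMaximal) :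
    ringKrullDim (A ⧸ I) = 0 := by
  have : Nontrivial (A ⧸ I) :=
    Ideal.Quotient.nontrivial_iff.mpr fun hI ↦ h.ne_top (hI ▸ Ideal.radical_top A)
  have := Ideal.krullDimLE_zero_quotient_of_isMaximal_radical h
  exact ringKrullDimZero_iff_ringKrullDim_eq_zero.mp this

theorem Ideal.isFiniteLength_quotient_of_isMaximal_radical [IsNoetherianRing A]
    (h : I.radical.IsMaximal) : IsFiniteLength A (A ⧸ I) := by
  have := Ideal.krullDimLE_zero_quotient_of_isMaximal_radical h
  have : IsArtinianRing (A ⧸ I) := IsNoetherianRing.isArtinianRing_of_krullDimLE_zero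
  have : IsArtinian A (A ⧸ I) :=
    isArtinian_of_surjective_algebraMap (Ideal.Quotient.mk_surjective (I := I))
  exact isFiniteLength_iff_isNoetherian_isArtinian.mpr ⟨inferInstance, this⟩

end MaximalRadical

/-- Let `(A, 𝔪)` be a Noetherian local ring, `𝔇` a set of derivations of `A`, and `I` a maximally
`𝔇`-differential ideal of `A`.  If `A/I` has prime characteristic `p > 0`, then `A/I` has finite
length as an `A`-module; in particular `I` is `𝔪`-primary and `dim (A/I) = 0`. -/
theorem maxDiffIdeal_finiteLength_of_charP
    {A : Type*} [CommRing A] [IsNoetherianRing A] [IsLocalRing A]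
    (𝔇 : Set (A →+ A)) (h𝔇 : ∀ d ∈ 𝔇, IsDeriv d)
    (I : Ideal A) (hI : IsMaxDiffIdeal 𝔇 I)
    (p : ℕ) (hp : p.Prime) (hchar : CharP (A ⧸ I) p) :
    IsFiniteLength A (A ⧸ I) ∧
      (I.IsPrimary ∧ I.radical = IsLocalRing.maximalIdeal A) ∧
      ringKrullDim (A ⧸ I) = 0 := by
  have hpI : (p : A) ∈ I := by
    rw [← Ideal.Quotient.eq_zero_iff_mem, map_natCast, CharP.cast_eq_zero]
  have hrad := hI.radical_eq_maximalIdeal h𝔇 hp.ne_zero hpI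
  have hmax : I.radical.IsMaximal := hrad ▸ IsLocalRing.maximalIdeal.isMaximal A
  exact ⟨Ideal.isFiniteLength_quotient_of_isMaximal_radical hmax,
    ⟨Ideal.isPrimary_of_isMaximal_radical hmax, hrad⟩,
    Ideal.ringKrullDim_quotient_eq_zero_of_isMaximal_radical hmax⟩
end

section
/- Let $A$ be a Noetherian local ring and let $\mathfrak{D}$ be a set of higher derivations of $A$, i.e., sequences $D = (D_0, D_1, D_2, \dots)$ of additive endomorphisms of $A$ with $D_0$ the identity and $D_n(ab) = \sum_{i+j=n} D_i(a) D_j(b)$ for all $n \geq 0$ and $a, b \in A$. Let $I$ be a proper ideal of $A$ that is maximally $\mathfrak{D}$-differential. Then $A$ is normally flat along $I$; that is, for every $n \geq 0$, the $A/I$-module $I^n/I^{n+1}$ is free. -/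
/-- `D` is a higher (Hasse–Schmidt) derivation of the commutative ring `A`: a sequence
`(D₀, D₁, D₂, …)` of additive endomorphisms of `A` with `D₀` the identity and
`Dₙ(ab) = ∑_{i+j=n} Dᵢ(a)·Dⱼ(b)` for all `n ≥ 0` and `a, b ∈ A`. -/
def IsHigherDeriv {A : Type*} [CommRing A] (D : ℕ → A →+ A) : Prop :=
  D 0 = AddMonoidHom.id A ∧
    ∀ (n : ℕ) (a b : A), D n (a * b) = ∑ i ∈ Finset.range (n + 1), D i a * D (n - i) b

/-- An ideal `I` is `𝔇`-differential for a set `𝔇` of higher derivations if `Dₙ(I) ⊆ I` for all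
`D ∈ 𝔇` and all `n ≥ 0`. -/
def IsHDiffIdeal {A : Type*} [CommRing A] (𝔇 : Set (ℕ → A →+ A)) (I : Ideal A) : Prop :=
  ∀ D ∈ 𝔇, ∀ n : ℕ, ∀ x ∈ I, D n x ∈ I

/-- An ideal `I` is maximally `𝔇`-differential if it is a proper `𝔇`-differential ideal and no
ideal `J` with `I ⊊ J ⊊ A` is `𝔇`-differential. -/
def IsMaxHDiffIdeal {A : Type*} [CommRing A] (𝔇 : Set (ℕ → A →+ A)) (I : Ideal A) : Prop :=
  I ≠ ⊤ ∧ IsHDiffIdeal 𝔇 I ∧ ∀ J : Ideal A, I < J → J < ⊤ → ¬ IsHDiffIdeal 𝔇 J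

/-!
Choose `u₁, …, uₛ ∈ Iⁿ` lifting a basis of `Iⁿ/𝔪Iⁿ` over the residue field. By Nakayama they
generate `Iⁿ`, so `Iⁿ/Iⁿ⁺¹` is free over `A/I` as soon as every relation `∑ aⱼ uⱼ ∈ Iⁿ⁺¹` has all
its coefficients in `I`. Let `J` be the ideal generated by the coefficients of all such relations.
Since `Iⁿ⁺¹ ⊆ 𝔪Iⁿ`, minimality of the `uⱼ` gives `J ⊆ 𝔪`. Moreover `J` is differential: `Iⁿ` and
`Iⁿ⁺¹` are differential, and by the Leibniz rule `∑ Dₖ(aⱼ) uⱼ` lies in `Iⁿ⁺¹` modulo the terms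
`Dᵢ(aⱼ) Dₖ₋ᵢ(uⱼ)`, `i < k`, which lie in `J Iⁿ` by induction on `k`. Then `I + J` is a proper
differential ideal, so `J ⊆ I` by maximality of `I`.
-/

section HigherDeriv

variable {A : Type*} [CommRing A] {𝔇 : Set (ℕ → A →+ A)}

theorem IsHigherDeriv.apply_zero {D : ℕ → A →+ A} (hD : IsHigherDeriv D) (a : A) : D 0 a = a := by
  rw [hD.1]; rfl

theorem isHDiffIdeal_top : IsHDiffIdeal 𝔇 (⊤ : Ideal A) :=
  fun _ _ _ _ _ => Submodule.mem_top

theorem IsHDiffIdeal.sup {I J : Ideal A} (hI : IsHDiffIdeal 𝔇 I) (hJ : IsHDiffIdeal 𝔇 J) :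
    IsHDiffIdeal 𝔇 (I ⊔ J) := by
  intro D hD k x hx
  obtain ⟨y, hy, z, hz, rfl⟩ := Submodule.mem_sup.mp hx
  rw [map_add]
  exact Submodule.add_mem_sup (hI D hD k y hy) (hJ D hD k z hz)

theorem IsHDiffIdeal.mul (h𝔇 : ∀ D ∈ 𝔇, IsHigherDeriv D) {I J : Ideal A}
    (hI : IsHDiffIdeal 𝔇 I) (hJ : IsHDiffIdeal 𝔇 J) : IsHDiffIdeal 𝔇 (I * J) := by
  intro D hD k x hx
  refine Submodule.mul_induction_on hx (fun x hx y hy => ?_) fun x y hx hy => ?_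
  · rw [(h𝔇 D hD).2]
    exact Ideal.sum_mem _ fun i _ => Ideal.mul_mem_mul (hI D hD i x hx) (hJ D hD _ y hy)
  · rw [map_add]; exact add_mem hx hy

theorem IsHDiffIdeal.pow (h𝔇 : ∀ D ∈ 𝔇, IsHigherDeriv D) {I : Ideal A}
    (hI : IsHDiffIdeal 𝔇 I) (q : ℕ) : IsHDiffIdeal 𝔇 (I ^ q) := by
  induction q with
  | zero => rw [pow_zero, Ideal.one_eq_top]; exact isHDiffIdeal_top
  | succ q ih => rw [pow_succ]; exact ih.mul h𝔇 hI

theorem isHDiffIdeal_span (h𝔇 : ∀ D ∈ 𝔇, IsHigherDeriv D) {S : Set A}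
    (hS : ∀ D ∈ 𝔇, ∀ k, ∀ x ∈ S, D k x ∈ Ideal.span S) : IsHDiffIdeal 𝔇 (Ideal.span S) := by
  intro D hD k x hx
  induction hx using Submodule.span_induction generalizing k with
  | mem x hx => exact hS D hD k x hx
  | zero => rw [map_zero]; exact zero_mem _
  | add x y _ _ hx hy => rw [map_add]; exact add_mem (hx k) (hy k)
  | smul r x _ hx =>
    rw [smul_eq_mul, (h𝔇 D hD).2]
    exact Ideal.sum_mem _ fun i _ => Ideal.mul_mem_left _ _ (hx _)

theorem IsMaxHDiffIdeal.le_of_isHDiffIdeal {I J : Ideal A} (hI : IsMaxHDiffIdeal 𝔇 I)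
    (hJ : IsHDiffIdeal 𝔇 J) (hIJ : I ⊔ J ≠ ⊤) : J ≤ I := by
  by_contra hJI
  exact hI.2.2 (I ⊔ J) (left_lt_sup.mpr hJI) (lt_top_iff_ne_top.mpr hIJ) (hI.2.1.sup hJ)

theorem IsMaxHDiffIdeal.le_of_le_maximalIdeal [IsLocalRing A] {I J : Ideal A}
    (hI : IsMaxHDiffIdeal 𝔇 I) (hJ : IsHDiffIdeal 𝔇 J) (hJm : J ≤ IsLocalRing.maximalIdeal A) :
    J ≤ I :=
  hI.le_of_isHDiffIdeal hJ <| ne_top_of_le_ne_top (IsLocalRing.maximalIdeal.isMaximal A).ne_top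
    (sup_le (IsLocalRing.le_maximalIdeal hI.1) hJm)

end HigherDeriv

section RelationCoeffs

variable {A : Type*} [CommRing A] {ι : Type*} [Fintype ι] {u : ι → A} {K : Ideal A}

def relationCoeffIdeal (u : ι → A) (K : Ideal A) : Ideal A :=
  Ideal.span {x | ∃ a : ι → A, ∑ j, a j * u j ∈ K ∧ x ∈ Set.range a}

theorem coeff_mem_relationCoeffIdeal {a : ι → A} (ha : ∑ j, a j * u j ∈ K) (j : ι) :
    a j ∈ relationCoeffIdeal u K :=
  Ideal.subset_span ⟨a, ha, j, rfl⟩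

theorem relationCoeffIdeal_le_iff {J : Ideal A} :
    relationCoeffIdeal u K ≤ J ↔ ∀ a : ι → A, ∑ j, a j * u j ∈ K → ∀ j, a j ∈ J := by
  refine ⟨fun h a ha j => h (coeff_mem_relationCoeffIdeal ha j), fun h => Ideal.span_le.mpr ?_⟩
  rintro _ ⟨a, ha, j, rfl⟩
  exact h a ha j

theorem Ideal.exists_sum_mul_eq_of_mem_mul_span {J : Ideal A} {y : A}
    (hy : y ∈ J * Ideal.span (Set.range u)) :
    ∃ b : ι → A, (∀ j, b j ∈ J) ∧ ∑ j, b j * u j = y := by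
  rw [← Ideal.smul_eq_mul, Ideal.span, Submodule.mem_ideal_smul_span_iff_exists_sum] at hy
  obtain ⟨b, hb, rfl⟩ := hy
  exact ⟨b, hb, by simp [Finsupp.sum_fintype]⟩

theorem coeff_mem_relationCoeffIdeal_of_sum_mem_sup {e : ι → A}
    (he : ∑ j, e j * u j ∈ K ⊔ relationCoeffIdeal u K * Ideal.span (Set.range u)) (j : ι) :
    e j ∈ relationCoeffIdeal u K := by
  obtain ⟨z, hz, y, hy, hzy⟩ := Submodule.mem_sup.mp he
  obtain ⟨b, hb, rfl⟩ := Ideal.exists_sum_mul_eq_of_mem_mul_span hy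
  have hrel : ∑ j, (e j - b j) * u j ∈ K := by
    simpa [sub_mul, Finset.sum_sub_distrib, ← hzy] using hz
  simpa using add_mem (coeff_mem_relationCoeffIdeal hrel j) (hb j)

theorem IsHigherDeriv.apply_coeff_mem_relationCoeffIdeal {D : ℕ → A →+ A} (hD : IsHigherDeriv D)
    (hK : ∀ k, ∀ x ∈ K, D k x ∈ K) (hu : ∀ k j, D k (u j) ∈ Ideal.span (Set.range u))
    {a : ι → A} (ha : ∑ j, a j * u j ∈ K) (k : ℕ) (j : ι) :
    D k (a j) ∈ relationCoeffIdeal u K := by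
  induction k using Nat.strong_induction_on generalizing j with
  | _ k ih =>
    refine coeff_mem_relationCoeffIdeal_of_sum_mem_sup (e := fun j => D k (a j)) ?_ j
    have hLeibniz : ∀ j, D k (a j) * u j =
        D k (a j * u j) - ∑ i ∈ Finset.range k, D i (a j) * D (k - i) (u j) := by
      intro j
      rw [hD.2, Finset.sum_range_succ, Nat.sub_self, hD.apply_zero]
      ring
    simp only [hLeibniz, Finset.sum_sub_distrib, ← map_sum]
    refine sub_mem (Submodule.mem_sup_left (hK k _ ha)) (Submodule.mem_sup_right ?_)
    exact sum_mem fun j _ => sum_mem fun i hi =>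
      Ideal.mul_mem_mul (ih i (Finset.mem_range.mp hi) j) (hu _ j)

theorem isHDiffIdeal_relationCoeffIdeal {𝔇 : Set (ℕ → A →+ A)} (h𝔇 : ∀ D ∈ 𝔇, IsHigherDeriv D)
    (hK : IsHDiffIdeal 𝔇 K) (hu : IsHDiffIdeal 𝔇 (Ideal.span (Set.range u))) :
    IsHDiffIdeal 𝔇 (relationCoeffIdeal u K) := by
  refine isHDiffIdeal_span h𝔇 ?_
  rintro D hD k _ ⟨a, ha, j, rfl⟩
  exact (h𝔇 D hD).apply_coeff_mem_relationCoeffIdeal (hK D hD)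
    (fun k j => hu D hD k _ (Ideal.subset_span ⟨j, rfl⟩)) ha k j

theorem IsMaxHDiffIdeal.coeff_mem_of_sum_mem_pow_succ [IsLocalRing A]
    {𝔇 : Set (ℕ → A →+ A)} (h𝔇 : ∀ D ∈ 𝔇, IsHigherDeriv D) {I : Ideal A}
    (hI : IsMaxHDiffIdeal 𝔇 I) {n : ℕ} (hu : Ideal.span (Set.range u) = I ^ n)
    (hmin : ∀ a : ι → A, ∑ j, a j * u j ∈ IsLocalRing.maximalIdeal A * I ^ n →
      ∀ j, a j ∈ IsLocalRing.maximalIdeal A) :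
    ∀ a : ι → A, ∑ j, a j * u j ∈ I ^ (n + 1) → ∀ j, a j ∈ I := by
  have hdiff : IsHDiffIdeal 𝔇 (relationCoeffIdeal u (I ^ (n + 1))) :=
    isHDiffIdeal_relationCoeffIdeal h𝔇 (hI.2.1.pow h𝔇 _) (hu ▸ hI.2.1.pow h𝔇 n)
  have hle : relationCoeffIdeal u (I ^ (n + 1)) ≤ IsLocalRing.maximalIdeal A :=
    relationCoeffIdeal_le_iff.mpr fun a ha => hmin a <|
      Ideal.mul_mono_left (IsLocalRing.le_maximalIdeal hI.1) (pow_succ' I n ▸ ha)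
  exact relationCoeffIdeal_le_iff.mp (hI.le_of_le_maximalIdeal hdiff hle)

end RelationCoeffs

section QuotientSmulTop

open Submodule

variable {R M : Type*} [CommRing R] [AddCommGroup M] [Module R M] {ι : Type*}

theorem linearIndependent_mkQ_smul_top_iff [Fintype ι] (I : Ideal R) (v : ι → M) :
    LinearIndependent (R ⧸ I) (fun j => (I • ⊤ : Submodule R M).mkQ (v j)) ↔
      ∀ a : ι → R, ∑ j, a j • v j ∈ I • (⊤ : Submodule R M) → ∀ j, a j ∈ I := by
  have hmk : ∀ a : ι → R, ∑ j, Ideal.Quotient.mk I (a j) • (I • ⊤ : Submodule R M).mkQ (v j) =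
      (I • ⊤ : Submodule R M).mkQ (∑ j, a j • v j) := by
    intro a
    rw [map_sum]
    simp
  rw [Fintype.linearIndependent_iff]
  constructor
  · intro h a ha j
    rw [← Ideal.Quotient.eq_zero_iff_mem]
    exact h _ (by rw [hmk, mkQ_apply, Quotient.mk_eq_zero]; exact ha) j
  · intro h g hg j
    choose a ha using fun j => Ideal.Quotient.mk_surjective (I := I) (g j)
    obtain rfl : g = fun j => Ideal.Quotient.mk I (a j) := funext fun j => (ha j).symm
    rw [hmk, mkQ_apply, Quotient.mk_eq_zero] at hg
    exact Ideal.Quotient.eq_zero_iff_mem.mpr (h a hg j)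

theorem restrictScalars_span_range_mkQ_smul_top (I : Ideal R) (v : ι → M) :
    (span (R ⧸ I) (Set.range fun j => (I • ⊤ : Submodule R M).mkQ (v j))).restrictScalars R =
      (span R (Set.range v)).map (I • ⊤ : Submodule R M).mkQ := by
  rw [restrictScalars_span R _ Ideal.Quotient.mk_surjective, map_span, ← Set.range_comp]
  rfl

theorem Module.free_quotient_smul_top_of_span_eq_top [Fintype ι] (I : Ideal R) {v : ι → M}
    (hspan : span R (Set.range v) = ⊤)
    (hv : ∀ a : ι → R, ∑ j, a j • v j ∈ I • (⊤ : Submodule R M) → ∀ j, a j ∈ I) :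
    Module.Free (R ⧸ I) (M ⧸ I • (⊤ : Submodule R M)) := by
  have hspan' : span (R ⧸ I) (Set.range fun j => (I • ⊤ : Submodule R M).mkQ (v j)) = ⊤ := by
    rw [← restrictScalars_eq_top_iff R, restrictScalars_span_range_mkQ_smul_top, hspan,
      Submodule.map_top, range_mkQ]
  exact Module.Free.of_basis
    (Module.Basis.mk ((linearIndependent_mkQ_smul_top_iff I v).mpr hv) hspan'.ge)

theorem IsLocalRing.exists_span_eq_top_linearIndependent_mkQ [IsLocalRing R] [Module.Finite R M] :
    ∃ (s : ℕ) (v : Fin s → M), span R (Set.range v) = ⊤ ∧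
      LinearIndependent (R ⧸ maximalIdeal R)
        (fun j => (maximalIdeal R • ⊤ : Submodule R M).mkQ (v j)) := by
  let _ := Ideal.Quotient.field (maximalIdeal R)
  let b := Module.finBasis (R ⧸ maximalIdeal R) (M ⧸ maximalIdeal R • (⊤ : Submodule R M))
  choose v hv using fun j => mkQ_surjective (maximalIdeal R • ⊤ : Submodule R M) (b j)
  have hvb : (fun j => (maximalIdeal R • ⊤ : Submodule R M).mkQ (v j)) = b := funext hv
  refine ⟨_, v, ?_, hvb ▸ b.linearIndependent⟩
  rw [← map_mkQ_eq_top, ← restrictScalars_span_range_mkQ_smul_top, hvb, b.span_eq,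
    restrictScalars_top]

end QuotientSmulTop

theorem Ideal.sum_smul_mem_smul_top_iff {A : Type*} [CommRing A] {ι : Type*} [Fintype ι]
    {J N : Ideal A} (v : ι → N) (a : ι → A) :
    ∑ j, a j • v j ∈ J • (⊤ : Submodule A N) ↔ ∑ j, a j * (v j : A) ∈ J * N := by
  rw [Submodule.mem_smul_top_iff, Ideal.smul_eq_mul]
  simp

theorem Ideal.span_range_coe_eq {A : Type*} [CommRing A] {ι : Type*} {N : Ideal A} {v : ι → N}
    (hv : Submodule.span A (Set.range v) = ⊤) : Ideal.span (Set.range fun j => (v j : A)) = N := by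
  have := congrArg (Submodule.map N.subtype) hv
  rwa [Submodule.map_span, Submodule.map_subtype_top, ← Set.range_comp] at this

/-- Let `A` be a Noetherian local ring, `𝔇` a set of higher derivations of `A`, and `I` a proper
ideal of `A` which is maximally `𝔇`-differential.  Then `A` is normally flat along `I`: for
every `n ≥ 0`, the `A/I`-module `Iⁿ/Iⁿ⁺¹` is free. -/
theorem normallyFlat_along_maxHDiffIdeal
    {A : Type*} [CommRing A] [IsNoetherianRing A] [IsLocalRing A]
    (𝔇 : Set (ℕ → A →+ A)) (h𝔇 : ∀ D ∈ 𝔇, IsHigherDeriv D)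
    (I : Ideal A) (hI : IsMaxHDiffIdeal 𝔇 I) (n : ℕ) :
    Module.Free (A ⧸ I) ((↥(I ^ n)) ⧸ (I • (⊤ : Submodule A ↥(I ^ n)))) := by
  obtain ⟨s, v, hspan, hind⟩ :=
    IsLocalRing.exists_span_eq_top_linearIndependent_mkQ (R := A) (M := ↥(I ^ n))
  have hmin : ∀ a : Fin s → A, ∑ j, a j * (v j : A) ∈ IsLocalRing.maximalIdeal A * I ^ n →
      ∀ j, a j ∈ IsLocalRing.maximalIdeal A := fun a ha =>
    (linearIndependent_mkQ_smul_top_iff _ v).mp hind a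
      ((Ideal.sum_smul_mem_smul_top_iff v a).mpr ha)
  refine Module.free_quotient_smul_top_of_span_eq_top I hspan fun a ha => ?_
  refine hI.coeff_mem_of_sum_mem_pow_succ h𝔇 (Ideal.span_range_coe_eq hspan) hmin a ?_
  rw [pow_succ']
  exact (Ideal.sum_smul_mem_smul_top_iff v a).mp ha
end
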